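/- arXiv:1912.11938 — 7 statements merged into one kernel-verified Lean document; each statement's English description precedes it below -/
import Mathlib

section
/- Let $(M^n)_{n\in\mathbb{N}}$ be a sequence of sequences of positive reals with $M^n_p \le M^{n+1}_p$ for all $n,p$, and let $(a_p)_{p\in\mathbb{N}}$ be a sequence of positive reals. If for every sequence $N$ of positive reals satisfying ($\forall n, \forall h>0, \exists C>0, \forall p: M^n_p \le C h^p N_p$) one has $\sup_p a_p/N_p < \infty$, then there exist $h>0$ and $n\in\mathbb{N}$ with $\sup_p h^p a_p / M^n_p < \infty$. -/
/-!
Suppose the conclusion fails. Then for every `k` the sequence `(k+1)^{-p} a_p / M^{k+1}_p` is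
unbounded, so there are infinitely many `p` with `(k+1) (k+1)^p M^{k+1}_p < a_p`, and we can pick
such witnesses `p_k` strictly increasing in `k`. On the block `p_k ≤ q < p_{k+1}` put
`N_q = (k+1)^q M^{k+1}_q`. Since the block level tends to infinity and `M^n` is nondecreasing in
`n`, eventually `M^n_q ≤ h^q N_q` for every `n` and `h > 0`, so `N ∈ V(𝔐)`; but
`a_{p_k} / N_{p_k} > k + 1`, so `a / N` is unbounded.
-/

open Filter Set

lemma frequently_atTop_lt_of_forall_exists_lt {β : Type*} [LinearOrder β] {f : ℕ → β}
    (hf : ∀ B, ∃ p, B < f p) (B : β) : ∃ᶠ p in atTop, B < f p := by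
  by_contra h
  rw [not_frequently] at h
  obtain ⟨C, hC⟩ := (isBoundedUnder_of_eventually_le (h.mono fun _ => le_of_not_gt)).bddAbove_range
  obtain ⟨p, hp⟩ := hf C
  exact hp.not_ge (hC (mem_range_self p))

lemma exists_pos_mul_bound_of_eventually_le {u v : ℕ → ℝ} (hv : ∀ q, 0 < v q)
    (huv : ∀ᶠ q in atTop, u q ≤ v q) : ∃ C, 0 < C ∧ ∀ q, u q ≤ C * v q := by
  obtain ⟨B, hB⟩ := (isBoundedUnder_of_eventually_le
    (huv.mono fun q hq => (div_le_one (hv q)).2 hq)).bddAbove_range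
  refine ⟨max B 1, by positivity, fun q => ?_⟩
  rw [← div_le_iff₀ (hv q)]
  exact (hB (mem_range_self q)).trans (le_max_left _ _)

/-- The index `k` of the block `P k ≤ q < P (k + 1)` containing `q` (and `0` for `q < P 0`). -/
def blockIndex (P : ℕ → ℕ) (q : ℕ) : ℕ :=
  Nat.findGreatest (fun k => P k ≤ q) q

section blockIndex

variable {P : ℕ → ℕ}

lemma le_blockIndex (hP : StrictMono P) {k q : ℕ} (h : P k ≤ q) : k ≤ blockIndex P q :=
  Nat.le_findGreatest ((hP.id_le k).trans h) h

lemma blockIndex_apply_self (hP : StrictMono P) (k : ℕ) : blockIndex P (P k) = k :=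
  le_antisymm
    (hP.le_iff_le.1 (Nat.findGreatest_spec (P := fun j => P j ≤ P k) (hP.id_le k) le_rfl))
    (le_blockIndex hP le_rfl)

lemma tendsto_blockIndex (hP : StrictMono P) : Tendsto (blockIndex P) atTop atTop :=
  tendsto_atTop_atTop.2 fun k => ⟨P k, fun _ => le_blockIndex hP⟩

end blockIndex

/-- On the block `P k ≤ q < P (k + 1)` this is the paper's `N_q = n^q M^n_q` with `n = k + 1`. -/
def blockWeight (M : ℕ → ℕ → ℝ) (P : ℕ → ℕ) (q : ℕ) : ℝ :=
  ((blockIndex P q : ℝ) + 1) ^ q * M (blockIndex P q + 1) q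

section blockWeight

variable {M : ℕ → ℕ → ℝ} {P : ℕ → ℕ}

lemma blockWeight_pos (hM : ∀ n p, 0 < M n p) (q : ℕ) : 0 < blockWeight M P q := by
  have := hM (blockIndex P q + 1) q
  unfold blockWeight
  positivity

lemma blockWeight_apply_self (hP : StrictMono P) (k : ℕ) :
    blockWeight M P (P k) = ((k : ℝ) + 1) ^ P k * M (k + 1) (P k) := by
  simp only [blockWeight, blockIndex_apply_self hP]

lemma eventually_le_pow_mul_blockWeight (hM : ∀ n p, 0 < M n p)
    (hMmono : ∀ n p, M n p ≤ M (n + 1) p) (hP : StrictMono P) (n : ℕ) {h : ℝ} (hh : 0 < h) :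
    ∀ᶠ q in atTop, M n q ≤ h ^ q * blockWeight M P q := by
  filter_upwards [(tendsto_blockIndex hP).eventually_ge_atTop (max n ⌈h⁻¹⌉₊)] with q hq
  set g := blockIndex P q
  have hn : n ≤ g + 1 := by omega
  have hhg : 1 ≤ h * ((g : ℝ) + 1) := by
    have : h⁻¹ ≤ (g : ℝ) + 1 :=
      (Nat.le_ceil _).trans (by exact_mod_cast (le_max_right _ _).trans (hq.trans g.le_succ))
    rwa [← inv_mul_le_iff₀ hh, mul_one]
  calc M n q ≤ M (g + 1) q := monotone_nat_of_le_succ (fun m => hMmono m q) hn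
    _ ≤ (h * ((g : ℝ) + 1)) ^ q * M (g + 1) q :=
      le_mul_of_one_le_left (hM _ _).le (one_le_pow₀ hhg)
    _ = h ^ q * blockWeight M P q := by rw [mul_pow, mul_assoc]; rfl

end blockWeight

theorem stmt0_general (M : ℕ → ℕ → ℝ) (hMpos : ∀ n p, 0 < M n p)
    (hMmono : ∀ n p, M n p ≤ M (n + 1) p)
    (a : ℕ → ℝ)
    (H : ∀ N : ℕ → ℝ, (∀ p, 0 < N p) →
      (∀ n : ℕ, ∀ h : ℝ, 0 < h → ∃ C : ℝ, 0 < C ∧ ∀ p : ℕ, M n p ≤ C * h ^ p * N p) →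
      ∃ B : ℝ, ∀ p, a p / N p ≤ B) :
    ∃ h : ℝ, 0 < h ∧ ∃ n : ℕ, ∃ B : ℝ, ∀ p, h ^ p * a p / M n p ≤ B := by
  by_contra! hcon
  have hwit : ∀ k : ℕ,
      ∃ᶠ q in atTop, ((k : ℝ) + 1) * ((k : ℝ) + 1) ^ q * M (k + 1) q < a q := by
    intro k
    have hk : (0 : ℝ) < k + 1 := by positivity
    refine (frequently_atTop_lt_of_forall_exists_lt
      (hcon _ (inv_pos.2 hk) (k + 1)) (k + 1)).mono fun q hq => ?_
    rwa [lt_div_iff₀ (hMpos _ _), inv_pow, lt_inv_mul_iff₀ (by positivity), mul_left_comm,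
      ← mul_assoc] at hq
  obtain ⟨P, hP, hPwit⟩ := extraction_forall_of_frequently hwit
  obtain ⟨B, hB⟩ := H (blockWeight M P) (blockWeight_pos hMpos) fun n h hh => by
    simpa only [mul_assoc] using exists_pos_mul_bound_of_eventually_le
      (fun q => mul_pos (pow_pos hh q) (blockWeight_pos hMpos q))
      (eventually_le_pow_mul_blockWeight hMpos hMmono hP n hh)
  have hgap : (⌈B⌉₊ : ℝ) + 1 < a (P ⌈B⌉₊) / blockWeight M P (P ⌈B⌉₊) := by
    rw [lt_div_iff₀ (blockWeight_pos hMpos _), blockWeight_apply_self hP, ← mul_assoc]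
    exact hPwit _
  linarith [Nat.le_ceil B, hB (P ⌈B⌉₊)]

/-- Lemma 3(i), nontrivial direction: if `sup_p a_p / N_p < ∞` for every
`N ∈ V(𝔐)`, then `sup_p h^p a_p / M^n_p < ∞` for some `h > 0` and `n`. -/
theorem stmt0 (M : ℕ → ℕ → ℝ) (hMpos : ∀ n p, 0 < M n p)
    (hMmono : ∀ n p, M n p ≤ M (n + 1) p)
    (a : ℕ → ℝ) (ha : ∀ p, 0 < a p)
    (H : ∀ N : ℕ → ℝ, (∀ p, 0 < N p) →
      (∀ n : ℕ, ∀ h : ℝ, 0 < h → ∃ C : ℝ, 0 < C ∧ ∀ p : ℕ, M n p ≤ C * h ^ p * N p) →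
      ∃ B : ℝ, ∀ p, a p / N p ≤ B) :
    ∃ h : ℝ, 0 < h ∧ ∃ n : ℕ, ∃ B : ℝ, ∀ p, h ^ p * a p / M n p ≤ B :=
  stmt0_general M hMpos hMmono a H
end

section
/- Let $(M^n)_{n\in\mathbb{N}}$ be a pointwise nondecreasing sequence of sequences of positive reals and let $(a_p)_{p\in\mathbb{N}}$ be positive. If for all $h>0$ and all $n\in\mathbb{N}$ one has $\sup_p a_p M^n_p / h^p < \infty$, then there exists a positive sequence $N$ with $M^n \prec N$ for every $n$ (i.e., $N \in V(\mathfrak{M})$) such that $\sup_p a_p N_p < \infty$. -/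
/-- Lemma 3(ii), nontrivial direction: if `sup_p a_p M^n_p / h^p < ∞` for all
`h > 0` and `n`, then there is `N ∈ V(𝔐)` with `sup_p a_p N_p < ∞`. -/
theorem stmt1 (M : ℕ → ℕ → ℝ) (hMpos : ∀ n p, 0 < M n p)
    (hMmono : ∀ n p, M n p ≤ M (n + 1) p)
    (a : ℕ → ℝ) (ha : ∀ p, 0 < a p)
    (H : ∀ h : ℝ, 0 < h → ∀ n : ℕ, ∃ B : ℝ, ∀ p, a p * M n p / h ^ p ≤ B) :
    ∃ N : ℕ → ℝ, (∀ p, 0 < N p) ∧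
      (∀ n : ℕ, ∀ h : ℝ, 0 < h → ∃ C : ℝ, 0 < C ∧ ∀ p : ℕ, M n p ≤ C * h ^ p * N p) ∧
      ∃ B : ℝ, ∀ p, a p * N p ≤ B := by
  have hmono : ∀ p, Monotone (fun n => M n p) := fun p =>
    monotone_nat_of_le_succ (fun n => hMmono n p)
  choose B hB using fun n : ℕ => H (1 / ((n : ℝ) + 1)) (by positivity) n
  -- key inequality: a p * M n p * (n+1)^p ≤ B n
  have key : ∀ n p, a p * M n p * ((n : ℝ) + 1) ^ p ≤ B n := by
    intro n p
    have := hB n p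
    rw [one_div_pow] at this
    rwa [div_div_eq_mul_div, div_one] at this
  have hBpos : ∀ n, 0 < B n := by
    intro n
    have := key n 0
    simp only [pow_zero, mul_one] at this
    exact lt_of_lt_of_le (mul_pos (ha 0) (hMpos n 0)) this
  set f : ℕ → ℕ → ℝ := fun p n => ((n : ℝ) + 1) ^ p * M n p / B n with hf
  have hfub : ∀ p n, f p n ≤ 1 / a p := by
    intro p n
    rw [div_le_div_iff₀ (hBpos n) (ha p)]
    calc ((n:ℝ) + 1) ^ p * M n p * a p = a p * M n p * ((n:ℝ)+1) ^ p := by ring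
      _ ≤ B n := key n p
      _ = 1 * B n := (one_mul _).symm
  have hbdd : ∀ p, BddAbove (Set.range (f p)) := fun p => ⟨1 / a p, by
    rintro x ⟨n, rfl⟩; exact hfub p n⟩
  set N : ℕ → ℝ := fun p => ⨆ n, f p n with hN
  have hle : ∀ p n, f p n ≤ N p := fun p n => le_ciSup (hbdd p) n
  have hNpos : ∀ p, 0 < N p := by
    intro p
    refine lt_of_lt_of_le ?_ (hle p 0)
    have := hMpos 0 p
    have := hBpos 0
    simp only [hf, Nat.cast_zero, zero_add, one_pow, one_mul]
    positivity
  refine ⟨N, hNpos, ?_, 1, ?_⟩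
  · intro n h hh
    set m := max n ⌈1 / h⌉₊ with hm
    have hinv : 1 / ((m : ℝ) + 1) ≤ h := by
      rw [div_le_iff₀ (by positivity)]
      have h1 : (1:ℝ)/h ≤ (⌈1/h⌉₊ : ℝ) := Nat.le_ceil _
      have h2 : (⌈1/h⌉₊ : ℝ) ≤ m := by exact_mod_cast Nat.cast_le.mpr (le_max_right _ _)
      have : (1:ℝ)/h ≤ (m:ℝ) + 1 := by linarith
      calc (1:ℝ) = h * (1/h) := by field_simp
        _ ≤ h * ((m:ℝ)+1) := by
            exact mul_le_mul_of_nonneg_left this (le_of_lt hh)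
    refine ⟨B m, hBpos m, fun p => ?_⟩
    have h1 : M n p ≤ M m p := hmono p (le_max_left _ _)
    have h2 : ((m : ℝ) + 1) ^ p * M m p / B m ≤ N p := hle p m
    have h3 : ((m : ℝ) + 1) ^ p * M m p ≤ B m * N p := by
      rw [div_le_iff₀ (hBpos m)] at h2; linarith [h2]
    have hmp : (0:ℝ) < ((m:ℝ)+1)^p := by positivity
    have h4 : M m p ≤ B m * N p / ((m:ℝ)+1)^p := (le_div_iff₀' hmp).mpr h3
    calc M n p ≤ M m p := h1
      _ ≤ B m * N p / ((m:ℝ)+1)^p := h4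
      _ = B m * (1/((m:ℝ)+1))^p * N p := by rw [one_div_pow]; field_simp
      _ ≤ B m * h ^ p * N p := by
          have : (1/((m:ℝ)+1))^p ≤ h ^ p :=
            pow_le_pow_left₀ (by positivity) hinv p
          have := mul_le_mul_of_nonneg_left this (le_of_lt (hBpos m))
          exact mul_le_mul_of_nonneg_right this (le_of_lt (hNpos p))
  · intro p
    have : N p ≤ 1 / a p := ciSup_le (hfub p)
    rw [le_div_iff₀ (ha p)] at this
    linarith [this]
end

section
/- Let $\omega$ be a weight function satisfying $\omega(2t) = O(\omega(t))$ and let $\mathfrak{M}_\omega = (M^n)$ with $M^n_p = \exp(\tfrac1n \phi_\omega^*(np))$. Then $\mathfrak{M}_\omega$ satisfies condition $\{\mathfrak{M}.2\}'$: for every $n \ge 1$ there exist $m \ge 1$ and $C, H > 0$ such that $M^n_{p+1} \le C H^p M^m_p$ for all $p \in \mathbb{N}$. -/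
open Asymptotics Filter

/- The Young conjugate `φ*` is a supremum of affine functions, hence convex, and
`n(p+1)` is the midpoint of `2np` and `2n`. So
`φ*(n(p+1))/n ≤ φ*(2np)/(2n) + φ*(2n)/(2n)`, which is `{𝔐.2}'` with `m = 2n`, `H = 1`
and `C = exp(φ*(2n)/(2n))`. -/

theorem convexOn_Ici_of_isLUB_sub {φ φs : ℝ → ℝ}
    (hφs : ∀ y : ℝ, 0 ≤ y → IsLUB {z : ℝ | ∃ x : ℝ, 0 ≤ x ∧ z = x * y - φ x} (φs y)) :
    ConvexOn ℝ (Set.Ici 0) φs := by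
  refine ⟨convex_Ici 0, fun y (hy : 0 ≤ y) z (hz : 0 ≤ z) a b ha hb hab => ?_⟩
  refine (hφs _ (by positivity)).2 ?_
  rintro _ ⟨x, hx, rfl⟩
  have hxy : x * y - φ x ≤ φs y := (hφs y hy).1 ⟨x, hx, rfl⟩
  have hxz : x * z - φ x ≤ φs z := (hφs z hz).1 ⟨x, hx, rfl⟩
  calc x * (a • y + b • z) - φ x = a * (x * y - φ x) + b * (x * z - φ x) := by
        simp only [smul_eq_mul]; linear_combination φ x * hab
    _ ≤ a • φs y + b • φs z := by
        simp only [smul_eq_mul]; gcongr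

theorem ConvexOn.inv_mul_apply_mul_add_one_le {f : ℝ → ℝ} (hf : ConvexOn ℝ (Set.Ici 0) f)
    {n p : ℝ} (hn : 0 < n) (hp : 0 ≤ p) :
    1 / n * f (n * (p + 1)) ≤ 1 / (2 * n) * f (2 * n) + 1 / (2 * n) * f (2 * n * p) := by
  have hmid := hf.2 (Set.mem_Ici.2 (by positivity : (0 : ℝ) ≤ 2 * n * p))
    (Set.mem_Ici.2 (by positivity : (0 : ℝ) ≤ 2 * n)) (show (0 : ℝ) ≤ 1 / 2 by norm_num)
    (show (0 : ℝ) ≤ 1 / 2 by norm_num) (by norm_num)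
  have hmidpoint : (1 / 2 : ℝ) • (2 * n * p) + (1 / 2 : ℝ) • (2 * n) = n * (p + 1) := by
    simp only [smul_eq_mul]; ring
  rw [hmidpoint] at hmid
  simp only [smul_eq_mul] at hmid
  calc 1 / n * f (n * (p + 1)) ≤ 1 / n * (1 / 2 * f (2 * n * p) + 1 / 2 * f (2 * n)) := by
        gcongr
    _ = 1 / (2 * n) * f (2 * n) + 1 / (2 * n) * f (2 * n * p) := by
        field_simp; ring

theorem stmt8_general
    (φ : ℝ → ℝ)
    (φs : ℝ → ℝ)
    (hφs : ∀ y : ℝ, 0 ≤ y →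
      IsLUB {z : ℝ | ∃ x : ℝ, 0 ≤ x ∧ z = x * y - φ x} (φs y)) :
    ∀ n : ℕ, 1 ≤ n → ∃ m : ℕ, 1 ≤ m ∧ ∃ C : ℝ, 0 < C ∧ ∃ H : ℝ, 0 < H ∧
      ∀ p : ℕ, Real.exp ((1 / (n : ℝ)) * φs ((n : ℝ) * ((p : ℝ) + 1))) ≤
        C * H ^ p * Real.exp ((1 / (m : ℝ)) * φs ((m : ℝ) * (p : ℝ))) := by
  intro n hn
  refine ⟨2 * n, by omega, Real.exp (1 / (2 * n : ℝ) * φs (2 * n)), Real.exp_pos _, 1, one_pos,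
    fun p => ?_⟩
  rw [one_pow, mul_one, ← Real.exp_add, Real.exp_le_exp]
  push_cast
  exact (convexOn_Ici_of_isLUB_sub hφs).inv_mul_apply_mul_add_one_le
    (by exact_mod_cast hn) p.cast_nonneg

/-- The weight matrix `𝔐_ω`, `M^n_p = exp(φ*(np)/n)`, satisfies `{𝔐.2}'`:
for every `n ≥ 1` there are `m ≥ 1` and `C, H > 0` with
`M^n_{p+1} ≤ C Hᵖ M^m_p` for all `p`. -/
theorem stmt8 (ω : ℝ → ℝ) (hcont : ContinuousOn ω (Set.Ici 0))
    (hmono : MonotoneOn ω (Set.Ici 0))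
    (hzero : ∀ t ∈ Set.Icc (0 : ℝ) 1, ω t = 0)
    (hnonneg : ∀ t : ℝ, 0 ≤ t → 0 ≤ ω t)
    (hO : (fun t => ω (2 * t)) =O[atTop] ω)
    (hlog : (fun t => Real.log t) =o[atTop] ω)
    (φ : ℝ → ℝ) (hφ : ∀ x : ℝ, 0 ≤ x → φ x = ω (Real.exp x))
    (hconv : ConvexOn ℝ (Set.Ici 0) φ)
    (φs : ℝ → ℝ)
    (hφs : ∀ y : ℝ, 0 ≤ y →
      IsLUB {z : ℝ | ∃ x : ℝ, 0 ≤ x ∧ z = x * y - φ x} (φs y)) :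
    ∀ n : ℕ, 1 ≤ n → ∃ m : ℕ, 1 ≤ m ∧ ∃ C : ℝ, 0 < C ∧ ∃ H : ℝ, 0 < H ∧
      ∀ p : ℕ, Real.exp ((1 / (n : ℝ)) * φs ((n : ℝ) * ((p : ℝ) + 1))) ≤
        C * H ^ p * Real.exp ((1 / (m : ℝ)) * φs ((m : ℝ) * (p : ℝ))) :=
  stmt8_general φ φs hφs
end

section
/- Let $(a_p)$ be a sequence of positive reals and $M=(M_p)$ a positive sequence. Then $\sup_p h^p a_p / M_p < \infty$ for some $h>0$ if and only if $\sup_p a_p / (M_p \prod_{j=0}^{p} r_j) < \infty$ for every nondecreasing sequence $(r_j)$ of positive reals with $r_j \to \infty$. -/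
/-!
Write `b_p = a_p / M_p`. If `hᵖ b_p ≤ B` and `r_j → ∞`, then `h r_j ≥ 1` eventually, so `∏_{j<n} h r_j` is bounded below
by some `c > 0` and `b_p / ∏_{j≤p} r_j = h · hᵖ b_p / ∏_{j≤p} h r_j ≤ h max(B, 0) / c`.
Conversely, if no `h` works, then for every `k` there are arbitrarily large `n` with
`b_n > k (k+1)^{n+1}`; picking such `n = φ k` along a strictly increasing `φ`, the sequence
`r_j = 1 + min {k | j ≤ φ k}` is nondecreasing, tends to infinity, and satisfies
`∏_{j ≤ φ k} r_j ≤ (k+1)^{φ k + 1}`, so that `b_{φ k} / ∏_{j ≤ φ k} r_j > k` for every `k`.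
-/

open Filter Finset

lemma frequently_lt_of_not_bddAbove_range {β : Type*} [LinearOrder β] {u : ℕ → β}
    (hu : ¬BddAbove (Set.range u)) (C : β) : ∃ᶠ n in atTop, C < u n := by
  contrapose! hu
  exact (isBoundedUnder_of_eventually_le hu).bddAbove_range

lemma exists_pos_forall_le_of_eventually_le {u : ℕ → ℝ} (hu : ∀ n, 0 < u n) {c : ℝ}
    (hc : 0 < c) (h : ∀ᶠ n in atTop, c ≤ u n) : ∃ c' > 0, ∀ n, c' ≤ u n := by
  obtain ⟨N, hN⟩ := eventually_atTop.1 h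
  obtain ⟨m, -, hm⟩ := (range (N + 1)).exists_min_image u ⟨0, by simp⟩
  refine ⟨min c (u m), lt_min hc (hu m), fun n => ?_⟩
  rcases le_or_gt N n with hn | hn
  · exact (min_le_left _ _).trans (hN n hn)
  · exact (min_le_right _ _).trans (hm n (mem_range.2 (by omega)))

lemma exists_pos_forall_le_prod_range {t : ℕ → ℝ} (ht0 : ∀ j, 0 < t j)
    (ht : ∀ᶠ j in atTop, 1 ≤ t j) : ∃ c > 0, ∀ n, c ≤ ∏ j ∈ range n, t j := by
  obtain ⟨N, hN⟩ := eventually_atTop.1 ht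
  refine exists_pos_forall_le_of_eventually_le (c := ∏ j ∈ range N, t j)
    (fun n => prod_pos fun j _ => ht0 j) (prod_pos fun j _ => ht0 j)
    (eventually_atTop.2 ⟨N, fun n hn => ?_⟩)
  rw [← prod_range_mul_prod_Ico t hn]
  exact le_mul_of_one_le_right (prod_pos fun j _ => ht0 j).le
    (one_le_prod fun j hj => hN j (mem_Ico.1 hj).1)

lemma exists_monotone_tendsto_atTop_le_of_strictMono {φ : ℕ → ℕ} (hφ : StrictMono φ) :
    ∃ f : ℕ → ℕ, Monotone f ∧ Tendsto f atTop atTop ∧ ∀ k j, j ≤ φ k → f j ≤ k := by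
  have hex : ∀ j, ∃ k, j ≤ φ k := fun j => ⟨j, hφ.le_apply⟩
  refine ⟨fun j => Nat.find (hex j), fun i j hij => Nat.find_mono fun k hk => hij.trans hk,
    tendsto_atTop_atTop.2 fun K => ⟨φ K + 1, fun j hj => ?_⟩,
    fun k j hj => Nat.find_min' (hex j) hj⟩
  by_contra! hlt
  have := (Nat.find_spec (hex j)).trans (hφ.monotone hlt.le)
  omega

theorem bddAbove_div_prod_of_bddAbove_pow_mul {b r : ℕ → ℝ} {h : ℝ} (hh : 0 < h)
    (hb : BddAbove (Set.range fun p => h ^ p * b p)) (hr0 : ∀ j, 0 < r j)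
    (hr : Tendsto r atTop atTop) :
    BddAbove (Set.range fun p => b p / ∏ j ∈ range (p + 1), r j) := by
  obtain ⟨B, hB⟩ := hb
  obtain ⟨c, hc, hprod⟩ := exists_pos_forall_le_prod_range (t := fun j => h * r j)
    (fun j => mul_pos hh (hr0 j)) ((hr.const_mul_atTop hh).eventually_ge_atTop 1)
  refine ⟨h * max B 0 / c, Set.forall_mem_range.2 fun p => ?_⟩
  have hbp : h ^ p * b p ≤ B := hB (Set.mem_range_self p)
  calc b p / ∏ j ∈ range (p + 1), r j
      = h * (h ^ p * b p) / ∏ j ∈ range (p + 1), h * r j := by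
        rw [prod_mul_distrib, prod_const, card_range]
        field_simp
        ring
    _ ≤ h * max B 0 / c :=
        div_le_div₀ (by positivity) (by gcongr; exact hbp.trans (le_max_left B 0)) hc
          (hprod (p + 1))

theorem exists_bddAbove_pow_mul_of_forall_bddAbove_div_prod {b : ℕ → ℝ}
    (H : ∀ r : ℕ → ℝ, (∀ j, 0 < r j) → Monotone r → Tendsto r atTop atTop →
      BddAbove (Set.range fun p => b p / ∏ j ∈ range (p + 1), r j)) :
    ∃ h > 0, BddAbove (Set.range fun p => h ^ p * b p) := by
  by_contra! hunb
  have hfreq (k : ℕ) : ∃ᶠ n in atTop, (k : ℝ) * (k + 1) ^ (n + 1) < b n := by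
    have hk : (0 : ℝ) < ((k : ℝ) + 1)⁻¹ := by positivity
    refine (frequently_lt_of_not_bddAbove_range (hunb _ hk) (k * (k + 1))).mono fun n hn => ?_
    rw [inv_pow, inv_mul_eq_div, lt_div_iff₀ (by positivity)] at hn
    simpa only [pow_succ, mul_assoc, mul_comm] using hn
  obtain ⟨φ, hφ, hbφ⟩ := extraction_forall_of_frequently hfreq
  obtain ⟨f, hf_mono, hf_tendsto, hf_le⟩ := exists_monotone_tendsto_atTop_le_of_strictMono hφ
  obtain ⟨B, hB⟩ := H (fun j => f j + 1) (fun j => by positivity)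
    (fun i j hij => by simpa using hf_mono hij)
    (tendsto_atTop_add_const_right _ 1 (tendsto_natCast_atTop_atTop.comp hf_tendsto))
  obtain ⟨k, hk⟩ := exists_nat_gt B
  have hprod : ∏ j ∈ range (φ k + 1), ((f j : ℝ) + 1) ≤ ((k : ℝ) + 1) ^ (φ k + 1) := by
    rw [pow_eq_prod_const]
    refine prod_le_prod (fun j _ => by positivity) fun j hj => ?_
    gcongr
    exact_mod_cast hf_le k j (Nat.lt_succ_iff.1 (mem_range.1 hj))
  have : (k : ℝ) < b (φ k) / ∏ j ∈ range (φ k + 1), ((f j : ℝ) + 1) := by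
    rw [lt_div_iff₀ (prod_pos fun j _ => by positivity)]
    calc (k : ℝ) * ∏ j ∈ range (φ k + 1), ((f j : ℝ) + 1)
        ≤ k * ((k : ℝ) + 1) ^ (φ k + 1) := by gcongr
      _ < b (φ k) := hbφ k
  exact (hB (Set.mem_range_self (φ k))).not_gt (hk.trans this)

theorem stmt11_general (a : ℕ → ℝ) (M : ℕ → ℝ) :
    (∃ h : ℝ, 0 < h ∧ ∃ B : ℝ, ∀ p, h ^ p * a p / M p ≤ B) ↔
    (∀ r : ℕ → ℝ, (∀ j, 0 < r j) → Monotone r →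
      Filter.Tendsto r Filter.atTop Filter.atTop →
      ∃ B : ℝ, ∀ p, a p / (M p * ∏ j ∈ Finset.range (p + 1), r j) ≤ B) := by
  have hbdd (f : ℕ → ℝ) : BddAbove (Set.range f) ↔ ∃ B, ∀ p, f p ≤ B := by
    simp only [bddAbove_def, Set.forall_mem_range]
  simp only [← div_div, mul_div_assoc, ← hbdd]
  exact ⟨fun ⟨h, hh, hb⟩ r hr0 _ hr => bddAbove_div_prod_of_bddAbove_pow_mul hh hb hr0 hr,
    exists_bddAbove_pow_mul_of_forall_bddAbove_div_prod⟩

/-- `sup_p hᵖ a_p / M_p < ∞` for some `h > 0` iff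
`sup_p a_p / (M_p ∏_{j=0}^p r_j) < ∞` for every `r ∈ 𝔑`. -/
theorem stmt11 (a : ℕ → ℝ) (ha : ∀ p, 0 < a p) (M : ℕ → ℝ) (hM : ∀ p, 0 < M p) :
    (∃ h : ℝ, 0 < h ∧ ∃ B : ℝ, ∀ p, h ^ p * a p / M p ≤ B) ↔
    (∀ r : ℕ → ℝ, (∀ j, 0 < r j) → Monotone r →
      Filter.Tendsto r Filter.atTop Filter.atTop →
      ∃ B : ℝ, ∀ p, a p / (M p * ∏ j ∈ Finset.range (p + 1), r j) ≤ B) :=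
  stmt11_general a M
end

section
/- Let $N=(N_p)$ be a log-convex positive sequence with $N_p \ge c h^p$ for some $c,h>0$, and let $\omega_N(t) = \sup_{p\in\mathbb{N}} \log(t^p N_0 / N_p)$ for $t \ge 0$ be its associated function. If $L$ is another such sequence and there is $C>0$ with $\omega_N(t) \le \omega_L(t) + C$ for all $t \ge 0$, then $L \subset N$, i.e., there exist $C', h' > 0$ with $L_p \le C' (h')^p N_p$ for all $p$. -/
/-!
Log-convexity makes the ratios `L (p + 1) / L p` nondecreasing, so at `t = L (p + 1) / L p`
the terms `t ^ q / L q` increase up to `q = p` and decrease afterwards: the supremum defining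
`ω_L t` is attained at `q = p`. The `p`-th term of `ω_N t ≤ ω_L t + C` then reads
`t ^ p N₀ / N p ≤ e ^ C t ^ p L₀ / L p`, and cancelling `t ^ p` gives `L p ≤ e ^ C (L₀ / N₀) N p`.
-/

open Real

theorem apply_le_of_le_succ_of_succ_le {α : Type*} [Preorder α] {f : ℕ → α} {p : ℕ}
    (hup : ∀ q < p, f q ≤ f (q + 1)) (hdown : ∀ q ≥ p, f (q + 1) ≤ f q) (q : ℕ) :
    f q ≤ f p := by
  rcases le_total q p with hqp | hpq
  · refine monotoneOn_of_le_succ Set.ordConnected_Iic (fun a _ _ ha ↦ ?_)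
      (Set.mem_Iic.2 hqp) (Set.mem_Iic.2 le_rfl) hqp
    rw [Order.succ_eq_add_one]
    exact hup a (Order.succ_le_iff.1 (Set.mem_Iic.1 ha))
  · exact antitoneOn_nat_Ici_of_succ_le hdown (le_refl p) hpq hpq

theorem monotone_succ_div_of_sq_le_mul {L : ℕ → ℝ} (hpos : ∀ p, 0 < L p)
    (hlc : ∀ p, L (p + 1) ^ 2 ≤ L p * L (p + 2)) : Monotone fun p ↦ L (p + 1) / L p := by
  refine monotone_nat_of_le_succ fun p ↦ ?_
  rw [div_le_div_iff₀ (hpos p) (hpos (p + 1))]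
  nlinarith [hlc p]

theorem pow_succ_div_eq_mul_div_div {a : ℝ} (ha : a ≠ 0) (b t : ℝ) (n : ℕ) :
    t ^ (n + 1) / b = t ^ n / a * (t / (b / a)) := by
  rw [div_div_eq_mul_div, pow_succ]
  field_simp

theorem pow_div_le_pow_div_of_monotone {L : ℕ → ℝ} (hpos : ∀ p, 0 < L p)
    (hmono : Monotone fun p ↦ L (p + 1) / L p) (p q : ℕ) :
    (L (p + 1) / L p) ^ q / L q ≤ (L (p + 1) / L p) ^ p / L p := by
  set t := L (p + 1) / L p
  have hratio (n : ℕ) : 0 < L (n + 1) / L n := div_pos (hpos _) (hpos _)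
  have hterm (n : ℕ) : 0 ≤ t ^ n / L n := div_nonneg (pow_nonneg (hratio p).le n) (hpos n).le
  refine apply_le_of_le_succ_of_succ_le (f := fun n ↦ t ^ n / L n) (fun n hn ↦ ?_)
    (fun n hn ↦ ?_) q
  · rw [pow_succ_div_eq_mul_div_div (hpos n).ne']
    exact le_mul_of_one_le_right (hterm n) ((one_le_div (hratio n)).2 (hmono hn.le))
  · rw [pow_succ_div_eq_mul_div_div (hpos n).ne']
    exact mul_le_of_le_one_right (hterm n) ((div_le_one (hratio n)).2 (hmono hn))

theorem stmt14_general (N L : ℕ → ℝ) (hNpos : ∀ p, 0 < N p) (hLpos : ∀ p, 0 < L p)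
    (hLlc : ∀ p : ℕ, (L (p + 1)) ^ 2 ≤ L p * L (p + 2))
    (ωL : ℝ → ℝ)
    (hωL : ∀ t : ℝ, 0 ≤ t →
      IsLUB {z : ℝ | ∃ p : ℕ, z = Real.log (t ^ p * L 0 / L p)} (ωL t))
    (C : ℝ)
    (hcomp : ∀ t : ℝ, 0 ≤ t → ∀ p : ℕ,
      Real.log (t ^ p * N 0 / N p) ≤ ωL t + C) :
    ∃ C' : ℝ, 0 < C' ∧ ∃ h' : ℝ, 0 < h' ∧ ∀ p : ℕ, L p ≤ C' * h' ^ p * N p := by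
  have hN0 := hNpos 0
  have hL0 := hLpos 0
  refine ⟨exp C * L 0 / N 0, by positivity, 1, one_pos, fun p ↦ ?_⟩
  set t := L (p + 1) / L p
  have ht : 0 < t := div_pos (hLpos _) (hLpos _)
  have hmax := pow_div_le_pow_div_of_monotone hLpos (monotone_succ_div_of_sq_le_mul hLpos hLlc) p
  have hωLt : ωL t ≤ log (t ^ p * L 0 / L p) := (hωL t ht.le).2 <| by
    rintro _ ⟨q, rfl⟩
    simp only [mul_div_right_comm _ (L 0)]
    exact log_le_log (by have := hLpos q; positivity) (mul_le_mul_of_nonneg_right (hmax q) hL0.le)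
  have hNp := hNpos p
  have hLp := hLpos p
  have hlog : log (t ^ p * N 0 / N p) ≤ log (t ^ p * L 0 / L p) + C := by
    linarith [hcomp t ht.le p]
  rw [log_le_iff_le_exp (by positivity), exp_add, exp_log (by positivity), mul_div_assoc,
    mul_div_assoc, mul_assoc, mul_le_mul_iff_right₀ (pow_pos ht p), div_le_iff₀ hNp] at hlog
  rw [one_pow, mul_one, div_mul_eq_mul_div, le_div_iff₀ hN0]
  calc L p * N 0 ≤ L p * (L 0 / L p * exp C * N p) := by gcongr
    _ = exp C * L 0 * N p := by field_simp

/-- Komatsu's Lemma 3.8: if `N, L` are log-convex sequences satisfying `(M.0)`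
and the associated functions satisfy `ω_N ≤ ω_L + C`, then `L ⊂ N`. -/
theorem stmt14 (N L : ℕ → ℝ) (hNpos : ∀ p, 0 < N p) (hLpos : ∀ p, 0 < L p)
    (hNlc : ∀ p : ℕ, (N (p + 1)) ^ 2 ≤ N p * N (p + 2))
    (hLlc : ∀ p : ℕ, (L (p + 1)) ^ 2 ≤ L p * L (p + 2))
    (hN0 : ∃ c : ℝ, 0 < c ∧ ∃ h : ℝ, 0 < h ∧ ∀ p : ℕ, c * h ^ p ≤ N p)
    (hL0 : ∃ c : ℝ, 0 < c ∧ ∃ h : ℝ, 0 < h ∧ ∀ p : ℕ, c * h ^ p ≤ L p)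
    (ωL : ℝ → ℝ)
    (hωL : ∀ t : ℝ, 0 ≤ t →
      IsLUB {z : ℝ | ∃ p : ℕ, z = Real.log (t ^ p * L 0 / L p)} (ωL t))
    (C : ℝ)
    (hcomp : ∀ t : ℝ, 0 ≤ t → ∀ p : ℕ,
      Real.log (t ^ p * N 0 / N p) ≤ ωL t + C) :
    ∃ C' : ℝ, 0 < C' ∧ ∃ h' : ℝ, 0 < h' ∧ ∀ p : ℕ, L p ≤ C' * h' ^ p * N p :=
  stmt14_general N L hNpos hLpos hLlc ωL hωL C hcomp
end

section
/- Let $(a_p)$ be a positive sequence, $M$ a positive sequence, and suppose that for all $h>0$, $\sup_p a_p M_p/h^p < \infty$. Then there exists a nondecreasing sequence $(r_j)$ of positive reals with $r_j \to \infty$ such that $\sup_p a_p M_p \prod_{j=0}^p r_j < \infty$. -/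
/-!
Put `c p = a p * M p`. Comparing with `h = ε / 2` shows `c p ≤ ε ^ (p + 1)` for large `p`,
so the roots `u p = c p ^ (1 / (p + 1))` tend to `0`. Their tail suprema
`t p = sup_{q ≥ p} u q` are positive, antitone and tend to `0`, and `r = t⁻¹` works:
for `j ≤ p` we have `u p ≤ t j`, hence `c p = u p ^ (p + 1) ≤ ∏_{j ≤ p} t j`.
-/

open Filter Topology Finset

theorem eventually_le_pow_succ_of_forall_div_pow_le {c : ℕ → ℝ}
    (H : ∀ h : ℝ, 0 < h → ∃ B : ℝ, ∀ p, c p / h ^ p ≤ B) {ε : ℝ} (hε : 0 < ε) :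
    ∀ᶠ p in atTop, c p ≤ ε ^ (p + 1) := by
  obtain ⟨B, hB⟩ := H (ε / 2) (half_pos hε)
  have h2 : Tendsto (fun p : ℕ => ε * 2 ^ p) atTop atTop :=
    (tendsto_pow_atTop_atTop_of_one_lt one_lt_two).const_mul_atTop hε
  filter_upwards [h2.eventually_ge_atTop B] with p hp
  calc c p ≤ B * (ε / 2) ^ p := (div_le_iff₀ (by positivity)).1 (hB p)
    _ ≤ ε * 2 ^ p * (ε / 2) ^ p := by gcongr
    _ = ε ^ (p + 1) := by rw [div_pow, pow_succ]; field_simp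

theorem tendsto_rpow_inv_succ_zero_of_forall_div_pow_le {c : ℕ → ℝ} (hc : ∀ p, 0 ≤ c p)
    (H : ∀ h : ℝ, 0 < h → ∃ B : ℝ, ∀ p, c p / h ^ p ≤ B) :
    Tendsto (fun p => c p ^ ((p + 1 : ℕ) : ℝ)⁻¹) atTop (𝓝 0) := by
  refine tendsto_order.2
    ⟨fun x hx => .of_forall fun p => hx.trans_le (Real.rpow_nonneg (hc p) _), fun ε hε => ?_⟩
  filter_upwards [eventually_le_pow_succ_of_forall_div_pow_le H (half_pos hε)] with p hp
  calc c p ^ ((p + 1 : ℕ) : ℝ)⁻¹ ≤ ((ε / 2) ^ (p + 1)) ^ ((p + 1 : ℕ) : ℝ)⁻¹ :=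
        Real.rpow_le_rpow (hc p) hp (by positivity)
    _ = ε / 2 := Real.pow_rpow_inv_natCast (half_pos hε).le p.succ_ne_zero
    _ < ε := half_lt_self hε

theorem exists_antitone_tendsto_zero_le {u : ℕ → ℝ} (hu : ∀ p, 0 < u p)
    (hu0 : Tendsto u atTop (𝓝 0)) :
    ∃ t : ℕ → ℝ,
      (∀ p, 0 < t p) ∧ Antitone t ∧ Tendsto t atTop (𝓝 0) ∧ ∀ p, u p ≤ t p := by
  have hbdd (p : ℕ) : BddAbove (Set.range fun q => u (p + q)) :=
    hu0.bddAbove_range.mono (Set.range_subset_iff.2 fun q => Set.mem_range_self _)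
  have hle (p : ℕ) : u p ≤ ⨆ q, u (p + q) := le_ciSup (hbdd p) 0
  refine ⟨fun p => ⨆ q, u (p + q), fun p => (hu p).trans_le (hle p), ?_, ?_, hle⟩
  · refine antitone_nat_of_succ_le fun p => ciSup_le fun q => ?_
    rw [add_right_comm, add_assoc]
    exact le_ciSup (hbdd p) _
  · refine tendsto_order.2
      ⟨fun x hx => .of_forall fun p => hx.trans ((hu p).trans_le (hle p)), fun ε hε => ?_⟩
    obtain ⟨N, hN⟩ := eventually_atTop.1 (hu0.eventually (gt_mem_nhds (half_pos hε)))
    filter_upwards [eventually_ge_atTop N] with p hp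
    exact (ciSup_le fun q => (hN (p + q) (by omega)).le).trans_lt (half_lt_self hε)

theorem pow_succ_le_prod_range_of_antitone {t : ℕ → ℝ} (ht : Antitone t) {x : ℝ}
    (hx : 0 ≤ x) {p : ℕ} (hxt : x ≤ t p) : x ^ (p + 1) ≤ ∏ j ∈ range (p + 1), t j := by
  calc x ^ (p + 1) = ∏ _j ∈ range (p + 1), x := by rw [prod_const, card_range]
    _ ≤ ∏ j ∈ range (p + 1), t j :=
      prod_le_prod (fun _ _ => hx) fun _ hj => hxt.trans (ht (mem_range_succ_iff.1 hj))

/-- If `sup_p a_p M_p / hᵖ < ∞` for all `h > 0`, there is `r ∈ 𝔑` with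
`sup_p a_p M_p ∏_{j=0}^p r_j < ∞`. -/
theorem stmt17 (a : ℕ → ℝ) (ha : ∀ p, 0 < a p) (M : ℕ → ℝ) (hM : ∀ p, 0 < M p)
    (H : ∀ h : ℝ, 0 < h → ∃ B : ℝ, ∀ p, a p * M p / h ^ p ≤ B) :
    ∃ r : ℕ → ℝ, (∀ j, 0 < r j) ∧ Monotone r ∧
      Filter.Tendsto r Filter.atTop Filter.atTop ∧
      ∃ B : ℝ, ∀ p, a p * M p * ∏ j ∈ Finset.range (p + 1), r j ≤ B := by
  have hc (p : ℕ) : 0 < a p * M p := mul_pos (ha p) (hM p)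
  obtain ⟨t, htpos, hanti, ht0, hut⟩ := exists_antitone_tendsto_zero_le
    (fun p => Real.rpow_pos_of_pos (hc p) _)
    (tendsto_rpow_inv_succ_zero_of_forall_div_pow_le (fun p => (hc p).le) H)
  refine ⟨fun j => (t j)⁻¹, fun j => inv_pos.2 (htpos j),
    fun _ j hij => inv_anti₀ (htpos j) (hanti hij),
    (tendsto_nhdsWithin_of_tendsto_nhds_of_eventually_within _ ht0
      (.of_forall htpos)).inv_tendsto_nhdsGT_zero, 1, fun p => ?_⟩
  have hprod : a p * M p ≤ ∏ j ∈ range (p + 1), t j := by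
    calc a p * M p = ((a p * M p) ^ ((p + 1 : ℕ) : ℝ)⁻¹) ^ (p + 1) :=
          (Real.rpow_inv_natCast_pow (hc p).le p.succ_ne_zero).symm
      _ ≤ ∏ j ∈ range (p + 1), t j :=
          pow_succ_le_prod_range_of_antitone hanti (Real.rpow_nonneg (hc p).le _) (hut p)
  rw [prod_inv_distrib, ← div_eq_mul_inv]
  exact (div_le_one (prod_pos fun j _ => htpos j)).2 hprod
end

section
/- Let $\omega, \sigma$ be weight functions with $\sigma = o(\omega)$ at infinity, and let $\phi_\sigma^*, \phi_\omega^*$ be the Young conjugates of $x \mapsto \sigma(e^x)$ and $x\mapsto \omega(e^x)$. Then for every $n \ge 1$ and every $h > 0$ there exists $C > 0$ such that $\exp(\tfrac1n \phi_\omega^*(np)) \le C h^p \exp(\phi_\sigma^*(p))$ for all $p\in\mathbb{N}$; i.e., $M^n_\omega \prec M^1_\sigma$. -/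
/-!
Since `σ` is doubling, `σ(e^L t) = O(σ(t)) = o(ω(t))`, so `n σ(e^L t) ≤ ω(t) + A` for all `t ≥ 0`,
where `L = |log h|`.
In the exponential variable this reads `n φ_σ(x + L) ≤ φ_ω(x) + A`, and taking Young conjugates
gives `φ_ω*(np) ≤ n (φ_σ*(p) - L p) + A`; exponentiating, `e^{-L p} ≤ hᵖ` supplies the factor `hᵖ`.
-/

open Asymptotics Filter Real Set

theorem isBigO_comp_two_pow_mul {σ : ℝ → ℝ} (hσO : (fun t => σ (2 * t)) =O[atTop] σ) :
    ∀ j : ℕ, (fun t => σ (2 ^ j * t)) =O[atTop] σ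
  | 0 => by simpa using isBigO_refl σ atTop
  | j + 1 => by
    have h := hσO.comp_tendsto (tendsto_id.const_mul_atTop (pow_pos two_pos j))
    simpa only [Function.comp_def, id, pow_succ, mul_comm _ (2 : ℝ), mul_assoc] using
      h.trans (isBigO_comp_two_pow_mul hσO j)

theorem isBigO_comp_mul {σ : ℝ → ℝ} (hσmono : MonotoneOn σ (Ici 0))
    (hσnonneg : ∀ t : ℝ, 0 ≤ t → 0 ≤ σ t) (hσO : (fun t => σ (2 * t)) =O[atTop] σ)
    {a : ℝ} (ha : 0 ≤ a) : (fun t => σ (a * t)) =O[atTop] σ := by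
  obtain ⟨j, hj⟩ := pow_unbounded_of_one_lt a one_lt_two
  refine (IsBigO.of_bound 1 ?_).trans (isBigO_comp_two_pow_mul hσO j)
  filter_upwards [eventually_ge_atTop 0] with t ht
  rw [one_mul, norm_of_nonneg (hσnonneg _ (by positivity)),
    norm_of_nonneg (hσnonneg _ (by positivity))]
  exact hσmono (mem_Ici.2 (by positivity)) (mem_Ici.2 (by positivity)) (by gcongr)

theorem exists_le_add_of_eventually_le {f g : ℝ → ℝ} (hf : MonotoneOn f (Ici 0))
    (hg : ∀ t : ℝ, 0 ≤ t → 0 ≤ g t) (hfg : ∀ᶠ t in atTop, f t ≤ g t) :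
    ∃ A : ℝ, ∀ t : ℝ, 0 ≤ t → f t ≤ g t + A := by
  obtain ⟨T, hT⟩ := eventually_atTop.1 (hfg.and (eventually_ge_atTop 0))
  refine ⟨|f T|, fun t ht => ?_⟩
  rcases le_total t T with htT | hTt
  · have := hf ht (hT T le_rfl).2 htT
    have := hg t ht
    have := le_abs_self (f T)
    linarith
  · have := (hT t hTt).1
    have := abs_nonneg (f T)
    linarith

theorem exists_const_mul_comp_mul_le_add {ω σ : ℝ → ℝ} (hσmono : MonotoneOn σ (Ici 0))
    (hσnonneg : ∀ t : ℝ, 0 ≤ t → 0 ≤ σ t) (hωnonneg : ∀ t : ℝ, 0 ≤ t → 0 ≤ ω t)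
    (hσO : (fun t => σ (2 * t)) =O[atTop] σ) (hlittle : σ =o[atTop] ω)
    {K a : ℝ} (hK : 0 ≤ K) (ha : 0 ≤ a) :
    ∃ A : ℝ, ∀ t : ℝ, 0 ≤ t → K * σ (a * t) ≤ ω t + A := by
  have hKσ : (fun t => K * σ (a * t)) =o[atTop] ω :=
    ((isBigO_comp_mul hσmono hσnonneg hσO ha).trans_isLittleO hlittle).const_mul_left K
  refine exists_le_add_of_eventually_le ?_ hωnonneg ?_
  · intro s hs t ht hst
    exact mul_le_mul_of_nonneg_left (hσmono (mul_nonneg ha hs) (mul_nonneg ha ht) (by gcongr)) hK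
  · filter_upwards [hKσ.bound one_pos, eventually_ge_atTop 0] with t ht ht0
    rw [one_mul, norm_of_nonneg (hωnonneg t ht0), Real.norm_eq_abs] at ht
    exact (le_abs_self _).trans ht

theorem young_conj_le_of_mul_comp_add_le {f g : ℝ → ℝ} {n L A y fy gny : ℝ}
    (hn : 0 ≤ n) (hL : 0 ≤ L) (hfg : ∀ x : ℝ, 0 ≤ x → n * f (x + L) ≤ g x + A)
    (hf : fy ∈ upperBounds {z : ℝ | ∃ x : ℝ, 0 ≤ x ∧ z = x * y - f x})
    (hg : IsLUB {z : ℝ | ∃ x : ℝ, 0 ≤ x ∧ z = x * (n * y) - g x} gny) :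
    gny ≤ n * (fy - L * y) + A := by
  refine hg.2 ?_
  rintro _ ⟨x, hx, rfl⟩
  have hshift := mul_le_mul_of_nonneg_left (hf ⟨x + L, by positivity, rfl⟩) hn
  have := hfg x hx
  linarith

theorem stmt18_general (ω σ : ℝ → ℝ)
    (hωnonneg : ∀ t : ℝ, 0 ≤ t → 0 ≤ ω t)
    (hσmono : MonotoneOn σ (Set.Ici 0))
    (hσnonneg : ∀ t : ℝ, 0 ≤ t → 0 ≤ σ t)
    (hσO : (fun t => σ (2 * t)) =O[atTop] σ)
    (φω φσ : ℝ → ℝ)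
    (hφω : ∀ x : ℝ, 0 ≤ x → φω x = ω (Real.exp x))
    (hφσ : ∀ x : ℝ, 0 ≤ x → φσ x = σ (Real.exp x))
    (φωs φσs : ℝ → ℝ)
    (hφωs : ∀ y : ℝ, 0 ≤ y →
      IsLUB {z : ℝ | ∃ x : ℝ, 0 ≤ x ∧ z = x * y - φω x} (φωs y))
    (hφσs : ∀ y : ℝ, 0 ≤ y →
      IsLUB {z : ℝ | ∃ x : ℝ, 0 ≤ x ∧ z = x * y - φσ x} (φσs y))
    (hlittle : σ =o[atTop] ω) :
    ∀ n : ℕ, 1 ≤ n → ∀ h : ℝ, 0 < h → ∃ C : ℝ, 0 < C ∧ ∀ p : ℕ,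
      Real.exp ((1 / (n : ℝ)) * φωs ((n : ℝ) * (p : ℝ))) ≤
        C * h ^ p * Real.exp (φσs (p : ℝ)) := by
  intro n hn h hh
  have hn0 : (0 : ℝ) < n := by exact_mod_cast hn
  set L := |log h|
  obtain ⟨A, hA⟩ := exists_const_mul_comp_mul_le_add hσmono hσnonneg hωnonneg hσO hlittle
    hn0.le (exp_pos L).le
  refine ⟨exp (A / n), exp_pos _, fun p => ?_⟩
  have hconj : φωs (n * p) ≤ n * (φσs p - L * p) + A := by
    refine young_conj_le_of_mul_comp_add_le hn0.le (abs_nonneg _) (fun x hx => ?_)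
      (hφσs p p.cast_nonneg).1 (hφωs _ (by positivity))
    rw [hφσ _ (by positivity), hφω x hx, exp_add, mul_comm (exp x)]
    exact hA _ (exp_pos x).le
  have hexpL : exp (-L) ≤ h := (exp_le_exp.2 (neg_abs_le _)).trans_eq (exp_log hh)
  calc exp ((1 / n) * φωs (n * p)) ≤ exp (A / n + p * (-L) + φσs p) := by
        refine exp_le_exp.2 ?_
        rw [one_div, inv_mul_le_iff₀ hn0]
        have : n * (A / n + p * (-L) + φσs p) = n * (φσs p - L * p) + A := by field_simp; ring
        linarith
    _ = exp (A / n) * exp (-L) ^ p * exp (φσs p) := by rw [exp_add, exp_add, exp_nat_mul]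
    _ ≤ exp (A / n) * h ^ p * exp (φσs p) := by gcongr

/-- If `σ = o(ω)` for weight functions `σ, ω`, then `M^n_ω ≺ M^1_σ`: for every
`n ≥ 1` and `h > 0` there is `C > 0` with
`exp(φ_ω*(np)/n) ≤ C hᵖ exp(φ_σ*(p))` for all `p`. -/
theorem stmt18 (ω σ : ℝ → ℝ)
    (hωcont : ContinuousOn ω (Set.Ici 0)) (hωmono : MonotoneOn ω (Set.Ici 0))
    (hωzero : ∀ t ∈ Set.Icc (0 : ℝ) 1, ω t = 0)
    (hωnonneg : ∀ t : ℝ, 0 ≤ t → 0 ≤ ω t)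
    (hωO : (fun t => ω (2 * t)) =O[atTop] ω)
    (hωlog : (fun t => Real.log t) =o[atTop] ω)
    (hσcont : ContinuousOn σ (Set.Ici 0)) (hσmono : MonotoneOn σ (Set.Ici 0))
    (hσzero : ∀ t ∈ Set.Icc (0 : ℝ) 1, σ t = 0)
    (hσnonneg : ∀ t : ℝ, 0 ≤ t → 0 ≤ σ t)
    (hσO : (fun t => σ (2 * t)) =O[atTop] σ)
    (hσlog : (fun t => Real.log t) =o[atTop] σ)
    (φω φσ : ℝ → ℝ)
    (hφω : ∀ x : ℝ, 0 ≤ x → φω x = ω (Real.exp x))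
    (hφσ : ∀ x : ℝ, 0 ≤ x → φσ x = σ (Real.exp x))
    (hωconv : ConvexOn ℝ (Set.Ici 0) φω) (hσconv : ConvexOn ℝ (Set.Ici 0) φσ)
    (φωs φσs : ℝ → ℝ)
    (hφωs : ∀ y : ℝ, 0 ≤ y →
      IsLUB {z : ℝ | ∃ x : ℝ, 0 ≤ x ∧ z = x * y - φω x} (φωs y))
    (hφσs : ∀ y : ℝ, 0 ≤ y →
      IsLUB {z : ℝ | ∃ x : ℝ, 0 ≤ x ∧ z = x * y - φσ x} (φσs y))
    (hlittle : σ =o[atTop] ω) :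
    ∀ n : ℕ, 1 ≤ n → ∀ h : ℝ, 0 < h → ∃ C : ℝ, 0 < C ∧ ∀ p : ℕ,
      Real.exp ((1 / (n : ℝ)) * φωs ((n : ℝ) * (p : ℝ))) ≤
        C * h ^ p * Real.exp (φσs (p : ℝ)) :=
  stmt18_general ω σ hωnonneg hσmono hσnonneg hσO φω φσ hφω hφσ φωs φσs hφωs hφσs hlittle
end
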